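/- arXiv:2603.12697 — 3 statements merged into one kernel-verified Lean document; each statement's English description precedes it below -/
import Mathlib

section
/- There exists a phase φ ∈ ℝ such that F'(U⃗) = e^{iφ} F(U⃗) for every sequence U⃗ = (U_1,…,U_m) of 2×2 unitary matrices if and only if there exists φ ∈ ℝ such that C'_{m:0} = e^{iφ} C_{m:0} and, for every i ∈ {1,…,m}, V_i(X) = V'_i(X) and V_i(Z) = V'_i(Z). -/
open Matrix Complex

noncomputable section

namespace QEC

/-- The space of `n`-qubit operators: `2^n × 2^n` complex matrices, with the
index set realized as `Fin n → Fin 2`. -/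
abbrev QMat (n : ℕ) := Matrix (Fin n → Fin 2) (Fin n → Fin 2) ℂ

/-- The Pauli `X` matrix. -/
def PX : Matrix (Fin 2) (Fin 2) ℂ := !![0, 1; 1, 0]

/-- The Pauli `Y` matrix. -/
def PY : Matrix (Fin 2) (Fin 2) ℂ := !![0, -Complex.I; Complex.I, 0]

/-- The Pauli `Z` matrix. -/
def PZ : Matrix (Fin 2) (Fin 2) ℂ := !![1, 0; 0, -1]

/-- The four single-qubit Pauli matrices `𝒫 = {I, X, Y, Z}`, indexed by `Fin 4`. -/
def pauli : Fin 4 → Matrix (Fin 2) (Fin 2) ℂ := ![1, PX, PY, PZ]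

/-- `A^{(k)} = I^{⊗(k-1)} ⊗ A ⊗ I^{⊗(n-k)}`: the single-qubit operator `A`
acting on the `k`-th qubit of an `n`-qubit system. -/
def embed {n : ℕ} (k : Fin n) (A : Matrix (Fin 2) (Fin 2) ℂ) : QMat n :=
  fun x y => A (x k) (y k) * ∏ q ∈ Finset.univ.erase k, (if x q = y q then (1 : ℂ) else 0)

/-- The Kronecker product `P 0 ⊗ P 1 ⊗ ⋯ ⊗ P (n-1)` of `n` single-qubit operators. -/
def kron {n : ℕ} (P : Fin n → Matrix (Fin 2) (Fin 2) ℂ) : QMat n :=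
  fun x y => ∏ q, P q (x q) (y q)

/-- The circuit `F(A⃗) = C_m A_m^{(k_m)} C_{m-1} ⋯ C_1 A_1^{(k_1)} C_0`
(here the layers are indexed by `Fin m`, with `i : Fin m` standing for layer `i+1`). -/
def circuit {n m : ℕ} (C : Fin (m + 1) → QMat n) (k : Fin m → Fin n)
    (A : Fin m → Matrix (Fin 2) (Fin 2) ℂ) : QMat n :=
  ((List.ofFn fun i : Fin m => C i.succ * embed (k i) (A i)).reverse).prod * C 0

/-- The cumulative product `C_{m:i} = C_m C_{m-1} ⋯ C_i`. -/
def Ccum {n m : ℕ} (C : Fin (m + 1) → QMat n) (i : Fin (m + 1)) : QMat n :=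
  (((List.ofFn C).reverse).take (m + 1 - (i : ℕ))).prod

/-- `V_i(P) = C_{m:i} P^{(k_i)} C_{m:i}^†` (with `i : Fin m` standing for layer `i+1`). -/
def Vop {n m : ℕ} (C : Fin (m + 1) → QMat n) (k : Fin m → Fin n) (i : Fin m)
    (P : Matrix (Fin 2) (Fin 2) ℂ) : QMat n :=
  Ccum C i.succ * embed (k i) P * (Ccum C i.succ)ᴴ

/-- `W(P⃗) = V_m(P_m) V_{m-1}(P_{m-1}) ⋯ V_1(P_1)`. -/
def Wop {n m : ℕ} (C : Fin (m + 1) → QMat n) (k : Fin m → Fin n)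
    (P : Fin m → Matrix (Fin 2) (Fin 2) ℂ) : QMat n :=
  ((List.ofFn fun i : Fin m => Vop C k i (P i)).reverse).prod

/-- The global phase `e^{iφ}`. -/
def phase (φ : ℝ) : ℂ := Complex.exp ((φ : ℂ) * Complex.I)

/-- A unitary `C` is Clifford when it maps every Pauli string to a signed Pauli
string under conjugation. -/
def IsClifford {n : ℕ} (C : QMat n) : Prop :=
  ∀ Q : Fin n → Fin 4, ∃ (ε : ℂ) (Q' : Fin n → Fin 4), (ε = 1 ∨ ε = -1) ∧
    C * kron (fun q => pauli (Q q)) * Cᴴ = ε • kron (fun q => pauli (Q' q))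

/-!
Moving each `C_j` to the right past the layers below it rewrites the circuit as
`F(U⃗) = V_m(U_m) ⋯ V_1(U_1) C_{m:0}`, where each `V_i` is a unital algebra homomorphism
`M₂(ℂ) → M_{2^n}(ℂ)`: the embedding `A ↦ A^{(k_i)}` followed by conjugation by the unitary
`C_{m:i}`. Taking all `U_j = I` isolates `C_{m:0}`, and taking a single `U_i ≠ I` then isolates
`V_i(U_i)`; this gives the forward direction. Conversely, `X` and `Z` generate `M₂(ℂ)` as an
algebra, so agreement of `V_i` and `V'_i` on `X` and `Z` forces `V_i = V'_i`, and the two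
factorizations then differ only in the phase of `C_{m:0}`.
-/

section

variable {n m : ℕ}

lemma kron_mul_kron (P Q : Fin n → Matrix (Fin 2) (Fin 2) ℂ) :
    kron P * kron Q = kron (fun q => P q * Q q) := by
  ext x y
  simp only [kron, Matrix.mul_apply]
  rw [Finset.prod_univ_sum, Fintype.piFinset_univ]
  exact Finset.sum_congr rfl fun z _ => Finset.prod_mul_distrib.symm

lemma kron_one : kron (1 : Fin n → Matrix (Fin 2) (Fin 2) ℂ) = 1 := by
  ext x y
  by_cases h : x = y
  · subst h; simp [kron]
  · obtain ⟨q, hq⟩ := Function.ne_iff.mp h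
    simpa [kron, h] using Finset.prod_eq_zero (Finset.mem_univ q) (by simp [hq])

lemma embed_eq_kron (k : Fin n) (A : Matrix (Fin 2) (Fin 2) ℂ) :
    embed k A = kron (Function.update 1 k A) := by
  ext x y
  rw [embed, kron, ← Finset.mul_prod_erase Finset.univ _ (Finset.mem_univ k)]
  congr 1
  · simp
  · refine Finset.prod_congr rfl fun q hq => ?_
    simp [Function.update_of_ne (Finset.ne_of_mem_erase hq), Matrix.one_apply]

def embedAlgHom (k : Fin n) : Matrix (Fin 2) (Fin 2) ℂ →ₐ[ℂ] QMat n :=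
  AlgHom.ofLinearMap
    { toFun := embed k
      map_add' := fun A B => by ext x y; simp [embed, add_mul]
      map_smul' := fun c A => by ext x y; simp [embed, mul_assoc] }
    (by simp [embed_eq_kron, kron_one])
    (fun A B => by
      simp only [LinearMap.coe_mk, AddHom.coe_mk, embed_eq_kron, kron_mul_kron]
      congr 1
      ext1 q
      by_cases h : q = k <;> simp [h])

@[simp]
lemma embedAlgHom_apply (k : Fin n) (A : Matrix (Fin 2) (Fin 2) ℂ) :
    embedAlgHom k A = embed k A :=
  rfl

lemma PX_mul_PZ : PX * PZ = !![0, -1; 1, 0] := by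
  ext i j
  fin_cases i <;> fin_cases j <;> simp [PX, PZ, Matrix.mul_apply]

lemma PX_mem_unitaryGroup : PX ∈ Matrix.unitaryGroup (Fin 2) ℂ := by
  rw [Matrix.mem_unitaryGroup_iff]
  ext i j
  fin_cases i <;> fin_cases j <;> simp [PX, Matrix.mul_apply, Matrix.star_eq_conjTranspose]

lemma PZ_mem_unitaryGroup : PZ ∈ Matrix.unitaryGroup (Fin 2) ℂ := by
  rw [Matrix.mem_unitaryGroup_iff]
  ext i j
  fin_cases i <;> fin_cases j <;> simp [PZ, Matrix.mul_apply, Matrix.star_eq_conjTranspose]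

-- `1`, `X`, `Z` and `XZ` span the `2 × 2` matrices.
lemma algHom_ext_PX_PZ {A : Type*} [Ring A] [Algebra ℂ A]
    {f g : Matrix (Fin 2) (Fin 2) ℂ →ₐ[ℂ] A} (hX : f PX = g PX) (hZ : f PZ = g PZ) : f = g := by
  ext1 M
  have hM : M = ((M 0 0 + M 1 1) / 2) • (1 : Matrix (Fin 2) (Fin 2) ℂ)
      + ((M 0 1 + M 1 0) / 2) • PX + ((M 0 0 - M 1 1) / 2) • PZ
      + ((M 1 0 - M 0 1) / 2) • (PX * PZ) := by
    rw [PX_mul_PZ]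
    ext i j
    fin_cases i <;> fin_cases j <;> simp [PX, PZ] <;> ring
  rw [hM]
  simp only [map_add, map_smul, map_mul, map_one, hX, hZ]

lemma Ccum_mem_unitaryGroup {C : Fin (m + 1) → QMat n}
    (hC : ∀ i, C i ∈ Matrix.unitaryGroup (Fin n → Fin 2) ℂ) (i : Fin (m + 1)) :
    Ccum C i ∈ Matrix.unitaryGroup (Fin n → Fin 2) ℂ := by
  refine Submonoid.list_prod_mem _ fun x hx => ?_
  obtain ⟨j, rfl⟩ := List.mem_ofFn.mp (List.mem_reverse.mp (List.take_subset _ _ hx))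
  exact hC j

def VopAlgHom (C : Fin (m + 1) → QMat n)
    (hC : ∀ i, C i ∈ Matrix.unitaryGroup (Fin n → Fin 2) ℂ) (k : Fin m → Fin n) (i : Fin m) :
    Matrix (Fin 2) (Fin 2) ℂ →ₐ[ℂ] QMat n :=
  (Unitary.conjStarAlgAut ℂ (QMat n)
    ⟨_, Ccum_mem_unitaryGroup hC i.succ⟩).toAlgEquiv.toAlgHom.comp (embedAlgHom (k i))

@[simp]
lemma VopAlgHom_apply (C : Fin (m + 1) → QMat n)
    (hC : ∀ i, C i ∈ Matrix.unitaryGroup (Fin n → Fin 2) ℂ) (k : Fin m → Fin n) (i : Fin m)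
    (A : Matrix (Fin 2) (Fin 2) ℂ) : VopAlgHom C hC k i A = Vop C k i A :=
  rfl

lemma _root_.List.prod_reverse_ofFn_eq_of_ne_eq_one {M : Type*} [Monoid M] :
    ∀ {m : ℕ} {f : Fin m → M} (i : Fin m), (∀ j, j ≠ i → f j = 1) →
      (List.ofFn f).reverse.prod = f i
  | 0, _, i, _ => i.elim0
  | m + 1, f, i, hf => by
    rw [List.ofFn_succ', List.concat_eq_append, List.reverse_concat, List.prod_cons]
    induction i using Fin.lastCases with
    | last =>
      rw [List.prod_eq_one, mul_one]
      simpa using fun j => hf _ (Fin.castSucc_ne_last j)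
    | cast i =>
      rw [hf _ (Fin.castSucc_ne_last i).symm, one_mul,
        prod_reverse_ofFn_eq_of_ne_eq_one i fun j hj => hf _ (Fin.castSucc_injective _ |>.ne hj)]

lemma circuit_succ (C : Fin (m + 2) → QMat n) (k : Fin (m + 1) → Fin n)
    (A : Fin (m + 1) → Matrix (Fin 2) (Fin 2) ℂ) :
    circuit C k A = C (Fin.last _) * embed (k (Fin.last m)) (A (Fin.last m)) *
      circuit (fun i => C i.castSucc) (fun i => k i.castSucc) (fun i => A i.castSucc) := by
  simp only [circuit, List.ofFn_succ', List.concat_eq_append, List.reverse_concat, List.prod_cons,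
    Fin.succ_last, Fin.succ_castSucc, Fin.castSucc_zero, mul_assoc]

lemma Ccum_last (C : Fin (m + 1) → QMat n) : Ccum C (Fin.last m) = C (Fin.last m) := by
  rw [Ccum, List.ofFn_succ']
  simp

lemma Ccum_castSucc (C : Fin (m + 2) → QMat n) (i : Fin (m + 1)) :
    Ccum C i.castSucc = C (Fin.last _) * Ccum (fun i => C i.castSucc) i := by
  have h : m + 1 + 1 - (i : ℕ) = (m + 1 - i) + 1 := by omega
  simp only [Ccum, List.ofFn_succ' C, List.concat_eq_append, List.reverse_concat, Fin.val_castSucc,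
    h, List.take_succ_cons, List.prod_cons]

lemma Vop_castSucc (C : Fin (m + 2) → QMat n) (k : Fin (m + 1) → Fin n) (i : Fin m)
    (A : Matrix (Fin 2) (Fin 2) ℂ) :
    Vop C k i.castSucc A = C (Fin.last _) *
      Vop (fun i => C i.castSucc) (fun i => k i.castSucc) i A * (C (Fin.last _))ᴴ := by
  simp only [Vop, Fin.succ_castSucc, Ccum_castSucc, conjTranspose_mul, mul_assoc]

lemma Wop_succ (C : Fin (m + 2) → QMat n)
    (hC : C (Fin.last _) ∈ Matrix.unitaryGroup (Fin n → Fin 2) ℂ) (k : Fin (m + 1) → Fin n)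
    (P : Fin (m + 1) → Matrix (Fin 2) (Fin 2) ℂ) :
    Wop C k P = Vop C k (Fin.last m) (P (Fin.last m)) * (C (Fin.last _) *
      Wop (fun i => C i.castSucc) (fun i => k i.castSucc) (fun i => P i.castSucc) *
      (C (Fin.last _))ᴴ) := by
  have hconj : ∀ x, C (Fin.last _) * x * (C (Fin.last _))ᴴ =
      Unitary.conjStarAlgAut ℂ (QMat n) ⟨_, hC⟩ x := fun _ => rfl
  rw [Wop, List.ofFn_succ', List.concat_eq_append, List.reverse_concat, List.prod_cons, hconj,
    Wop, map_list_prod, List.map_reverse, List.map_ofFn]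
  simp only [Vop_castSucc, hconj]
  rfl

lemma circuit_eq_Wop_mul_Ccum (C : Fin (m + 1) → QMat n)
    (hC : ∀ i, C i ∈ Matrix.unitaryGroup (Fin n → Fin 2) ℂ) (k : Fin m → Fin n)
    (A : Fin m → Matrix (Fin 2) (Fin 2) ℂ) :
    circuit C k A = Wop C k A * Ccum C 0 := by
  induction m with
  | zero =>
    simp only [circuit, Wop, List.ofFn_zero, List.reverse_nil, List.prod_nil, one_mul]
    exact (Ccum_last C).symm
  | succ m ih =>
    have hCl : (C (Fin.last _))ᴴ * C (Fin.last _) = 1 := Matrix.mem_unitaryGroup_iff'.mp (hC _)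
    rw [circuit_succ, ih _ (fun i => hC _), Wop_succ C (hC _), Vop,
      show Ccum C 0 = _ from Ccum_castSucc C 0, Fin.succ_last, Ccum_last]
    simp only [mul_assoc]
    rw [← mul_assoc (C _)ᴴ, hCl, one_mul, ← mul_assoc (C _)ᴴ, hCl, one_mul]

lemma circuit_one {C : Fin (m + 1) → QMat n}
    (hC : ∀ i, C i ∈ Matrix.unitaryGroup (Fin n → Fin 2) ℂ) (k : Fin m → Fin n) :
    circuit C k 1 = Ccum C 0 := by
  rw [circuit_eq_Wop_mul_Ccum C hC, Wop, List.prod_eq_one, one_mul]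
  simp only [List.mem_reverse, List.mem_ofFn, Pi.one_apply]
  rintro _ ⟨i, rfl⟩
  exact map_one (VopAlgHom C hC k i)

lemma circuit_mulSingle {C : Fin (m + 1) → QMat n}
    (hC : ∀ i, C i ∈ Matrix.unitaryGroup (Fin n → Fin 2) ℂ) (k : Fin m → Fin n) (i : Fin m)
    (A : Matrix (Fin 2) (Fin 2) ℂ) : circuit C k (Pi.mulSingle i A) = Vop C k i A * Ccum C 0 := by
  rw [circuit_eq_Wop_mul_Ccum C hC, Wop, List.prod_reverse_ofFn_eq_of_ne_eq_one i,
    Pi.mulSingle_eq_same]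
  intro j hj
  rw [Pi.mulSingle_eq_of_ne hj, ← VopAlgHom_apply C hC, map_one]

end

theorem stmt0_general (n m : ℕ)
    (C C' : Fin (m + 1) → QMat n)
    (hC : ∀ i, C i ∈ Matrix.unitaryGroup (Fin n → Fin 2) ℂ)
    (hC' : ∀ i, C' i ∈ Matrix.unitaryGroup (Fin n → Fin 2) ℂ)
    (k l : Fin m → Fin n) :
    (∃ φ : ℝ, ∀ U : Fin m → Matrix (Fin 2) (Fin 2) ℂ,
        (∀ i, U i ∈ Matrix.unitaryGroup (Fin 2) ℂ) →
        circuit C' l U = phase φ • circuit C k U) ↔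
    (∃ φ : ℝ, Ccum C' 0 = phase φ • Ccum C 0 ∧
        ∀ i : Fin m, Vop C k i PX = Vop C' l i PX ∧ Vop C k i PZ = Vop C' l i PZ) := by
  constructor
  · rintro ⟨φ, hφ⟩
    have hCcum : Ccum C' 0 = phase φ • Ccum C 0 := by
      simpa only [circuit_one hC, circuit_one hC'] using hφ 1 fun _ => one_mem _
    have hV : ∀ i A, A ∈ Matrix.unitaryGroup (Fin 2) ℂ → Vop C k i A = Vop C' l i A := by
      intro i A hA
      have h := hφ (Pi.mulSingle i A) fun j => by
        by_cases hj : j = i <;> simp [hj, hA, one_mem]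
      rw [circuit_mulSingle hC, circuit_mulSingle hC', hCcum, mul_smul_comm] at h
      exact (Unitary.isUnit_coe (U := ⟨_, Ccum_mem_unitaryGroup hC 0⟩)).mul_left_injective
        (smul_right_injective _ (Complex.exp_ne_zero _) h).symm
    exact ⟨φ, hCcum, fun i => ⟨hV i _ PX_mem_unitaryGroup, hV i _ PZ_mem_unitaryGroup⟩⟩
  · rintro ⟨φ, hCcum, hXZ⟩
    have hV : ∀ i A, Vop C k i A = Vop C' l i A := fun i =>
      DFunLike.congr_fun (algHom_ext_PX_PZ (f := VopAlgHom C hC k i) (g := VopAlgHom C' hC' l i)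
        (hXZ i).1 (hXZ i).2)
    refine ⟨φ, fun U _ => ?_⟩
    rw [circuit_eq_Wop_mul_Ccum C hC, circuit_eq_Wop_mul_Ccum C' hC', hCcum, mul_smul_comm]
    simp only [Wop, hV]

/-- There exists a phase `φ` with `F'(U⃗) = e^{iφ} F(U⃗)` for all sequences of
2×2 unitaries iff there exists `φ` with `C'_{m:0} = e^{iφ} C_{m:0}` and
`V_i(X) = V'_i(X)`, `V_i(Z) = V'_i(Z)` for all `i`. -/
theorem stmt0 (n m : ℕ) (hn : 1 ≤ n) (hm : 1 ≤ m)
    (C C' : Fin (m + 1) → QMat n)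
    (hC : ∀ i, C i ∈ Matrix.unitaryGroup (Fin n → Fin 2) ℂ)
    (hC' : ∀ i, C' i ∈ Matrix.unitaryGroup (Fin n → Fin 2) ℂ)
    (k l : Fin m → Fin n) :
    (∃ φ : ℝ, ∀ U : Fin m → Matrix (Fin 2) (Fin 2) ℂ,
        (∀ i, U i ∈ Matrix.unitaryGroup (Fin 2) ℂ) →
        circuit C' l U = phase φ • circuit C k U) ↔
    (∃ φ : ℝ, Ccum C' 0 = phase φ • Ccum C 0 ∧
        ∀ i : Fin m, Vop C k i PX = Vop C' l i PX ∧ Vop C k i PZ = Vop C' l i PZ) :=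
  stmt0_general n m C C' hC hC' k l

end QEC
end
end

section
/- For any fixed φ ∈ ℝ, the identity F'(U⃗) = e^{iφ} F(U⃗) holds for every sequence U⃗ = (U_1,…,U_m) of 2×2 unitary matrices if and only if F'(P⃗) = e^{iφ} F(P⃗) holds for every sequence P⃗ = (P_1,…,P_m) ∈ 𝒫^m of single-qubit Pauli matrices (with the same φ). -/
open Matrix Complex

noncomputable section

namespace QEC

lemma embed_add {n : ℕ} (k : Fin n) (A B : Matrix (Fin 2) (Fin 2) ℂ) :
    embed k (A + B) = embed k A + embed k B := by
  ext x y; simp [embed, add_mul]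

lemma embed_smul {n : ℕ} (k : Fin n) (c : ℂ) (A : Matrix (Fin 2) (Fin 2) ℂ) :
    embed k (c • A) = c • embed k A := by
  ext x y; simp [embed, mul_assoc]

lemma embed_zero {n : ℕ} (k : Fin n) : embed k (0 : Matrix (Fin 2) (Fin 2) ℂ) = 0 := by
  ext x y; simp [embed]

lemma prod_reverse_ofFn_split {M : Type*} [Monoid M] {m : ℕ} (L : Fin m → M) (j : Fin m) :
    ((List.ofFn L).reverse).prod =
      (((List.ofFn L).drop ((j : ℕ) + 1)).reverse).prod * L j *
        (((List.ofFn L).take (j : ℕ)).reverse).prod := by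
  conv_lhs => rw [← List.take_append_drop (j : ℕ) (List.ofFn L),
    List.drop_eq_getElem_cons (by simp [j.isLt])]
  simp [List.reverse_append, mul_assoc]

lemma take_update {n m : ℕ} (C : Fin (m + 1) → QMat n) (k : Fin m → Fin n)
    (A : Fin m → Matrix (Fin 2) (Fin 2) ℂ) (j : Fin m) (B : Matrix (Fin 2) (Fin 2) ℂ) :
    ((List.ofFn fun i : Fin m => C i.succ * embed (k i) (Function.update A j B i)).take (j : ℕ)) =
    ((List.ofFn fun i : Fin m => C i.succ * embed (k i) (A i)).take (j : ℕ)) := by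
  apply List.ext_getElem
  · simp
  · intro i h1 h2
    simp only [List.getElem_take, List.getElem_ofFn]
    simp only [List.length_take, List.length_ofFn, lt_min_iff] at h1
    rw [Function.update_of_ne]
    exact Fin.ne_of_val_ne (by simp; omega)

lemma drop_update {n m : ℕ} (C : Fin (m + 1) → QMat n) (k : Fin m → Fin n)
    (A : Fin m → Matrix (Fin 2) (Fin 2) ℂ) (j : Fin m) (B : Matrix (Fin 2) (Fin 2) ℂ) :
    ((List.ofFn fun i : Fin m => C i.succ * embed (k i) (Function.update A j B i)).drop ((j : ℕ) + 1)) =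
    ((List.ofFn fun i : Fin m => C i.succ * embed (k i) (A i)).drop ((j : ℕ) + 1)) := by
  apply List.ext_getElem
  · simp
  · intro i h1 h2
    simp only [List.getElem_drop, List.getElem_ofFn]
    rw [Function.update_of_ne]
    exact Fin.ne_of_val_ne (by simp; omega)

lemma circuit_update {n m : ℕ} (C : Fin (m + 1) → QMat n) (k : Fin m → Fin n)
    (A : Fin m → Matrix (Fin 2) (Fin 2) ℂ) (j : Fin m) (B : Matrix (Fin 2) (Fin 2) ℂ) :
    circuit C k (Function.update A j B) =
      (((List.ofFn fun i : Fin m => C i.succ * embed (k i) (A i)).drop ((j : ℕ) + 1)).reverse).prod *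
        (C j.succ * embed (k j) B) *
      ((((List.ofFn fun i : Fin m => C i.succ * embed (k i) (A i)).take (j : ℕ)).reverse).prod * C 0) := by
  unfold circuit
  rw [prod_reverse_ofFn_split _ j, take_update, drop_update, Function.update_self]
  noncomm_ring

lemma circuit_update_add {n m : ℕ} (C : Fin (m + 1) → QMat n) (k : Fin m → Fin n)
    (A : Fin m → Matrix (Fin 2) (Fin 2) ℂ) (j : Fin m) (B B' : Matrix (Fin 2) (Fin 2) ℂ) :
    circuit C k (Function.update A j (B + B')) =
      circuit C k (Function.update A j B) + circuit C k (Function.update A j B') := by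
  simp only [circuit_update, embed_add]
  noncomm_ring

lemma circuit_update_smul {n m : ℕ} (C : Fin (m + 1) → QMat n) (k : Fin m → Fin n)
    (A : Fin m → Matrix (Fin 2) (Fin 2) ℂ) (j : Fin m) (c : ℂ) (B : Matrix (Fin 2) (Fin 2) ℂ) :
    circuit C k (Function.update A j (c • B)) = c • circuit C k (Function.update A j B) := by
  simp only [circuit_update, embed_smul, Matrix.mul_smul, Matrix.smul_mul]

lemma circuit_update_zero {n m : ℕ} (C : Fin (m + 1) → QMat n) (k : Fin m → Fin n)
    (A : Fin m → Matrix (Fin 2) (Fin 2) ℂ) (j : Fin m) :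
    circuit C k (Function.update A j (0 : Matrix (Fin 2) (Fin 2) ℂ)) = 0 := by
  simp [circuit_update, embed_zero]

lemma pauli_unitary (p : Fin 4) : pauli p ∈ Matrix.unitaryGroup (Fin 2) ℂ := by
  rw [Matrix.mem_unitaryGroup_iff]
  fin_cases p <;>
  · ext i j
    fin_cases i <;> fin_cases j <;>
      simp [pauli, PX, PY, PZ, Matrix.mul_apply, Fin.sum_univ_two, Matrix.star_apply,
        Matrix.one_apply]

lemma mem_span_pauli (A : Matrix (Fin 2) (Fin 2) ℂ) :
    A ∈ Submodule.span ℂ (Set.range pauli) := by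
  have h : A = ((A 0 0 + A 1 1)/2) • pauli 0 + ((A 0 1 + A 1 0)/2) • pauli 1
      + ((Complex.I * (A 0 1 - A 1 0))/2) • pauli 2 + ((A 0 0 - A 1 1)/2) • pauli 3 := by
    ext i j
    fin_cases i <;> fin_cases j <;>
      · simp [pauli, PX, PY, PZ]
        ring_nf
        try simp [Complex.I_sq]
        try ring
  rw [h]
  apply Submodule.add_mem
  apply Submodule.add_mem
  apply Submodule.add_mem
  all_goals exact Submodule.smul_mem _ _ (Submodule.subset_span (Set.mem_range_self _))

/-- For a fixed phase `φ`, `F'(U⃗) = e^{iφ} F(U⃗)` for every sequence of 2×2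
unitaries iff `F'(P⃗) = e^{iφ} F(P⃗)` for every sequence of single-qubit Pauli matrices. -/
theorem stmt1 (n m : ℕ) (hn : 1 ≤ n) (hm : 1 ≤ m)
    (C C' : Fin (m + 1) → QMat n)
    (hC : ∀ i, C i ∈ Matrix.unitaryGroup (Fin n → Fin 2) ℂ)
    (hC' : ∀ i, C' i ∈ Matrix.unitaryGroup (Fin n → Fin 2) ℂ)
    (k l : Fin m → Fin n) (φ : ℝ) :
    (∀ U : Fin m → Matrix (Fin 2) (Fin 2) ℂ,
        (∀ i, U i ∈ Matrix.unitaryGroup (Fin 2) ℂ) →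
        circuit C' l U = phase φ • circuit C k U) ↔
    (∀ p : Fin m → Fin 4,
        circuit C' l (fun i => pauli (p i)) = phase φ • circuit C k (fun i => pauli (p i))) := by
  constructor
  · intro h p
    exact h _ (fun i => pauli_unitary (p i))
  · intro h U hU
    have key : ∀ s : Finset (Fin m), ∀ A : Fin m → Matrix (Fin 2) (Fin 2) ℂ,
        (∀ i ∈ s, A i ∈ Submodule.span ℂ (Set.range pauli)) →
        (∀ i ∉ s, ∃ p, A i = pauli p) →
        circuit C' l A = phase φ • circuit C k A := by
      intro s
      induction s using Finset.induction with
      | empty =>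
        intro A _ hA
        have hA' : ∀ i, ∃ p, A i = pauli p := fun i => hA i (by simp)
        choose p hp using hA'
        have : A = fun i => pauli (p i) := funext hp
        rw [this]
        exact h p
      | @insert a s ha IH =>
        intro A hspan hpauli
        have hAa : A a ∈ Submodule.span ℂ (Set.range pauli) :=
          hspan a (Finset.mem_insert_self a s)
        have main : ∀ B, B ∈ Submodule.span ℂ (Set.range pauli) →
            circuit C' l (Function.update A a B) =
              phase φ • circuit C k (Function.update A a B) := by
          intro B hB
          induction hB using Submodule.span_induction with
          | mem B hBmem =>
            obtain ⟨p, rfl⟩ := hBmem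
            apply IH
            · intro i hi
              rw [Function.update_of_ne (fun hEq : i = a => ha (hEq ▸ hi))]
              exact hspan i (Finset.mem_insert_of_mem hi)
            · intro i hi
              by_cases hia : i = a
              · subst hia
                exact ⟨p, Function.update_self _ _ _⟩
              · rw [Function.update_of_ne hia]
                exact hpauli i (by simp [hia, hi])
          | zero => simp [circuit_update_zero]
          | add B B' _ _ hB hB' =>
            rw [circuit_update_add, circuit_update_add, hB, hB', smul_add]
          | smul c B _ hB =>
            rw [circuit_update_smul, circuit_update_smul, hB, smul_comm]
        have : Function.update A a (A a) = A := Function.update_eq_self a A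
        rw [← this]
        exact main (A a) hAa
    exact key Finset.univ U (fun i _ => mem_span_pauli (U i))
      (fun i hi => absurd (Finset.mem_univ i) hi)


end QEC
end
end

section
/- For any fixed φ ∈ ℝ, the identity F'(U⃗_σ) = e^{iφ} F(U⃗) holds for every sequence U⃗ = (U_1,…,U_m) of 2×2 unitary matrices if and only if F'(P⃗_σ) = e^{iφ} F(P⃗) holds for every P⃗ ∈ 𝒫^m (with the same φ). -/
open Matrix Complex

noncomputable section

namespace QEC

/-! Both sides of the equivalence are multilinear in `(U_1, …, U_m)`, and the Pauli matrices
span all `2 × 2` matrices, so agreement on Pauli tuples propagates to all tuples. -/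

lemma _root_.List.reverse_ofFn {α : Type*} {n : ℕ} (f : Fin n → α) :
    (List.ofFn f).reverse = List.ofFn fun i => f i.rev := by
  apply List.ext_getElem <;> simp only [List.length_reverse, List.length_ofFn,
    List.getElem_reverse, List.getElem_ofFn, Fin.rev]
  intro i _ _
  congr 2
  omega

lemma span_range_pauli : Submodule.span ℂ (Set.range pauli) = ⊤ := by
  refine eq_top_iff.mpr fun M _ => (Submodule.mem_span_range_iff_exists_fun ℂ).mpr ?_
  -- the coefficient of a Pauli matrix `P` is `tr (P M) / 2`
  refine ⟨![(M 0 0 + M 1 1) / 2, (M 0 1 + M 1 0) / 2, (M 0 1 - M 1 0) / 2 * I,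
    (M 0 0 - M 1 1) / 2], ?_⟩
  ext i j
  fin_cases i <;> fin_cases j <;> simp [Fin.sum_univ_four, pauli, PX, PY, PZ] <;> ring_nf <;>
    simp only [I_sq] <;> ring

lemma pauli_mem_unitaryGroup (q : Fin 4) : pauli q ∈ unitaryGroup (Fin 2) ℂ := by
  rw [mem_unitaryGroup_iff]
  fin_cases q <;> ext i j <;> fin_cases i <;> fin_cases j <;>
    simp [pauli, PX, PY, PZ, mul_apply, Fin.sum_univ_two, one_apply]

def embedLinearMap {n : ℕ} (k : Fin n) : Matrix (Fin 2) (Fin 2) ℂ →ₗ[ℂ] QMat n where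
  toFun := embed k
  map_add' A B := by
    funext x y
    simp [embed, add_mul]
  map_smul' c A := by
    funext x y
    simp [embed, mul_assoc]

def circuitMultilinear {n m : ℕ} (C : Fin (m + 1) → QMat n) (k : Fin m → Fin n) :
    MultilinearMap ℂ (fun _ : Fin m => Matrix (Fin 2) (Fin 2) ℂ) (QMat n) :=
  (LinearMap.mulRight ℂ (C 0)).compMultilinearMap
    (((MultilinearMap.mkPiAlgebraFin ℂ m (QMat n)).domDomCongr Fin.revPerm).compLinearMap
      fun i => LinearMap.mulLeft ℂ (C i.succ) ∘ₗ embedLinearMap (k i))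

lemma circuitMultilinear_apply {n m : ℕ} (C : Fin (m + 1) → QMat n) (k : Fin m → Fin n)
    (A : Fin m → Matrix (Fin 2) (Fin 2) ℂ) : circuitMultilinear C k A = circuit C k A := by
  simp [circuitMultilinear, circuit, List.reverse_ofFn, embedLinearMap]

theorem stmt9_general (n m : ℕ)
    (C C' : Fin (m + 1) → QMat n)
    (k l : Fin m → Fin n) (σ : Equiv.Perm (Fin m)) (φ : ℝ) :
    (∀ U : Fin m → Matrix (Fin 2) (Fin 2) ℂ,
        (∀ i, U i ∈ Matrix.unitaryGroup (Fin 2) ℂ) →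
        circuit C' l (fun i => U (σ i)) = phase φ • circuit C k U) ↔
    (∀ p : Fin m → Fin 4,
        circuit C' l (fun i => pauli (p (σ i))) =
          phase φ • circuit C k (fun i => pauli (p i))) := by
  refine ⟨fun h p => h (fun i => pauli (p i)) fun i => pauli_mem_unitaryGroup (p i),
    fun h U _ => ?_⟩
  have agree : (circuitMultilinear C' l).domDomCongr σ = phase φ • circuitMultilinear C k := by
    refine MultilinearMap.ext_of_span_eq_top (g := fun _ => pauli) (fun _ => span_range_pauli)
      fun p => ?_
    simpa [circuitMultilinear_apply] using h p
  simpa [circuitMultilinear_apply] using congrArg (· U) agree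

/-- For a fixed phase `φ` and permutation `σ`, `F'(U⃗_σ) = e^{iφ} F(U⃗)` for
every sequence of 2×2 unitaries iff `F'(P⃗_σ) = e^{iφ} F(P⃗)` for every `P⃗ ∈ 𝒫^m`. -/
theorem stmt9 (n m : ℕ) (hn : 1 ≤ n) (hm : 1 ≤ m)
    (C C' : Fin (m + 1) → QMat n)
    (hC : ∀ i, C i ∈ Matrix.unitaryGroup (Fin n → Fin 2) ℂ)
    (hC' : ∀ i, C' i ∈ Matrix.unitaryGroup (Fin n → Fin 2) ℂ)
    (k l : Fin m → Fin n) (σ : Equiv.Perm (Fin m)) (φ : ℝ) :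
    (∀ U : Fin m → Matrix (Fin 2) (Fin 2) ℂ,
        (∀ i, U i ∈ Matrix.unitaryGroup (Fin 2) ℂ) →
        circuit C' l (fun i => U (σ i)) = phase φ • circuit C k U) ↔
    (∀ p : Fin m → Fin 4,
        circuit C' l (fun i => pauli (p (σ i))) =
          phase φ • circuit C k (fun i => pauli (p i))) :=
  stmt9_general n m C C' k l σ φ

end QEC
end
end
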